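/- arXiv:2101.04100 — 2 statements merged into one kernel-verified Lean document; each statement's English description precedes it below -/
import Mathlib

section
/- Fix d = 2m, a real matrix A, and a time-symmetric second-order real basic method S for A which in addition is symplectic: S(z)ᵀ·J·S(z) = J for all z ∈ ℂ, where J is the canonical symplectic 2m×2m matrix. Let n ≥ 2 and let α_1, …, α_s ∈ ℂ be symmetric-conjugate (α_{s+1−j} = conj(α_j)), and suppose the composition P(h) = S(α_s h)⋯S(α_1 h) satisfies (fun h : ℝ => P(h) − exp(h·A)) = O(h^{2n+1}) as h → 0 (order 2n). Let R(h) be the entrywise real part of P(h). Then R is pseudo-symplectic of order 4n+3, i.e. (fun h : ℝ => R(h)ᵀ·J·R(h) − J) is O(h^{4n+4}) as h → 0. -/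
/-!
The composition `P(h)` is symplectic, and since `S` is real, `conj P(h)` is the composition
with the reversed coefficients, so it is symplectic as well; time-symmetry makes `conj P(-h)` the
inverse of `P(h)`. For `R = (P + conj P) / 2` and `Q = P - conj P` the two symplecticity relations
give `Rᵀ J R - J = -¼ Qᵀ J Q`, so it suffices to show `Q = O(h^(2n+2))`.
Writing `P(h) = exp(hA) + E(h)` with `E = O(h^(2n+1))`, the inverse relation forces
`E(h) + conj E(-h) = O(h^(2n+2))`, hence `Q(h) - Q(-h) = O(h^(2n+2))`: the coefficient of the odd
power `h^(2n+1)` in the Taylor expansion of the analytic function `Q` vanishes.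
-/

open Matrix Asymptotics Filter NormedSpace

attribute [local instance] Matrix.normedAddCommGroup Matrix.normedSpace

/-- The canonical symplectic matrix `J = [[0, 1], [-1, 0]]` on `ℝ^(m+m)`. -/
noncomputable def canonicalJ (m : ℕ) : Matrix (Fin (m + m)) (Fin (m + m)) ℝ :=
  (Matrix.fromBlocks 0 1 (-1) 0).submatrix finSumFinEquiv.symm finSumFinEquiv.symm

open Topology

theorem List.ofFn_comp_rev {α : Type*} {s : ℕ} (f : Fin s → α) :
    List.ofFn (fun j => f j.rev) = (List.ofFn f).reverse := by
  apply List.ext_getElem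
  · simp
  · intro i _ _
    simp only [List.getElem_ofFn, List.getElem_reverse, List.length_ofFn]
    congr 1
    ext
    simp only [Fin.val_rev]
    omega

theorem List.prod_map_mul_prod_reverse_map {ι M : Type*} [Monoid M] {f g : ι → M}
    (h : ∀ i, f i * g i = 1) : ∀ l : List ι, (l.map f).prod * (l.map g).reverse.prod = 1
  | [] => by simp
  | i :: l => by
    simp only [List.map_cons, List.prod_cons, List.reverse_cons, List.prod_append,
      List.prod_nil, mul_one]
    rw [mul_assoc, ← mul_assoc (l.map f).prod, List.prod_map_mul_prod_reverse_map h l, one_mul, h]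

section PowerAsymptotics

variable {𝕜 E : Type*} [NontriviallyNormedField 𝕜] [NormedAddCommGroup E]

theorem Asymptotics.isBigO_pow_pow_of_le {m n : ℕ} (h : m ≤ n) :
    (fun t : 𝕜 => t ^ n) =O[𝓝 0] (· ^ m) := by
  obtain rfl | hlt := h.eq_or_lt
  · exact isBigO_refl _ _
  · exact (isLittleO_pow_pow hlt).isBigO

theorem Asymptotics.IsBigO.comp_neg_pow {f : 𝕜 → E} {k : ℕ} (h : f =O[𝓝 0] (· ^ k)) :
    (fun t => f (-t)) =O[𝓝 0] (· ^ k) := by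
  have hneg : Tendsto (fun t : 𝕜 => -t) (𝓝 0) (𝓝 0) := by simpa using tendsto_neg (0 : 𝕜)
  exact (h.comp_tendsto hneg).trans_le fun t => by simp [norm_pow]

variable [NormedSpace 𝕜 E]

theorem eq_zero_of_pow_smul_isBigO_pow_succ {g : 𝕜 → E} {k : ℕ} (hg : ContinuousAt g 0)
    (h : (fun t => t ^ k • g t) =O[𝓝 0] (· ^ (k + 1))) : g 0 = 0 := by
  have hg' : g =O[𝓝[≠] 0] (fun t => t) := by
    refine ((isBigO_refl (fun t : 𝕜 => (t ^ k)⁻¹) _).smul (h.mono nhdsWithin_le_nhds)).congr'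
      ?_ ?_ <;> filter_upwards [self_mem_nhdsWithin] with t ht
    · rw [smul_smul, inv_mul_cancel₀ (pow_ne_zero _ ht), one_smul]
    · rw [smul_eq_mul, pow_succ, ← mul_assoc, inv_mul_cancel₀ (pow_ne_zero _ ht), one_mul]
  exact tendsto_nhds_unique (hg.tendsto.mono_left nhdsWithin_le_nhds)
    (hg'.trans_tendsto (tendsto_id.mono_left nhdsWithin_le_nhds))

theorem AnalyticAt.exists_eventuallyEq_pow_smul_of_isBigO {f : 𝕜 → E} {k : ℕ}
    (hf : AnalyticAt 𝕜 f 0) (h : f =O[𝓝 0] (· ^ k)) :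
    ∃ g, AnalyticAt 𝕜 g 0 ∧ ∀ᶠ t in 𝓝 0, f t = t ^ k • g t := by
  suffices (k : ℕ∞) ≤ analyticOrderAt f 0 by simpa using (natCast_le_analyticOrderAt hf).1 this
  by_contra! hlt
  obtain ⟨m, hm⟩ := ENat.ne_top_iff_exists.1 (hlt.trans_le le_top).ne
  obtain ⟨g, hg, hg0, hfg⟩ := hf.analyticOrderAt_eq_natCast.1 hm.symm
  have hmk : m + 1 ≤ k := by rw [← hm] at hlt; exact_mod_cast hlt
  refine hg0 (eq_zero_of_pow_smul_isBigO_pow_succ (k := m) hg.continuousAt ?_)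
  refine (h.congr' (hfg.mono fun t ht => by simp [ht]) EventuallyEq.rfl).trans ?_
  exact isBigO_pow_pow_of_le hmk

theorem AnalyticAt.isBigO_pow_succ_of_odd [CharZero 𝕜] {f : 𝕜 → E} {k : ℕ}
    (hf : AnalyticAt 𝕜 f 0) (hk : Odd k) (hO : f =O[𝓝 0] (· ^ k))
    (hodd : (fun t => f t - f (-t)) =O[𝓝 0] (· ^ (k + 1))) : f =O[𝓝 0] (· ^ (k + 1)) := by
  obtain ⟨g, hg, hfg⟩ := hf.exists_eventuallyEq_pow_smul_of_isBigO hO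
  have hfg_neg : ∀ᶠ t in 𝓝 0, f (-t) = (-t) ^ k • g (-t) := by
    have hneg : Tendsto (fun t : 𝕜 => -t) (𝓝 0) (𝓝 0) := by simpa using tendsto_neg (0 : 𝕜)
    exact hneg.eventually hfg
  have hg0 : g 0 = 0 := by
    have h2 : (fun t => t ^ k • (g t + g (-t))) =O[𝓝 0] (· ^ (k + 1)) := by
      refine hodd.congr' ?_ EventuallyEq.rfl
      filter_upwards [hfg, hfg_neg] with t h1 h2
      rw [h1, h2, hk.neg_pow, neg_smul, smul_add, sub_neg_eq_add]
    have hcont : ContinuousAt (fun t => g t + g (-t)) 0 :=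
      hg.continuousAt.add (hg.continuousAt.comp_of_eq continuous_neg.continuousAt neg_zero)
    have := eq_zero_of_pow_smul_isBigO_pow_succ hcont h2
    rwa [neg_zero, ← two_smul 𝕜, smul_eq_zero, or_iff_right two_ne_zero] at this
  have hgO : g =O[𝓝 0] (fun t => t) := by
    simpa [hg0] using hg.differentiableAt.isBigO_sub
  refine ((isBigO_refl (· ^ k) _).smul hgO).congr' (hfg.mono fun t ht => ht.symm) ?_
  exact Eventually.of_forall fun t => by simp [pow_succ]

end PowerAsymptotics

section MatrixAsymptotics

variable {m n p : Type*} [Fintype m] [Fintype n] [Fintype p]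

theorem Asymptotics.IsBigO.matrix_transpose {α R F : Type*} [NormedAddCommGroup R] [Norm F]
    {l : Filter α} {f : α → Matrix m n R} {u : α → F} (hf : f =O[l] u) :
    (fun t => (f t)ᵀ) =O[l] u :=
  isBigO_norm_left.1 <| by simpa only [Matrix.norm_transpose] using hf.norm_left

theorem Asymptotics.IsBigO.matrix_map_conj {α F : Type*} [Norm F] {l : Filter α}
    {f : α → Matrix m n ℂ} {u : α → F} (hf : f =O[l] u) :
    (fun t => (f t).map (starRingEnd ℂ)) =O[l] u :=
  isBigO_norm_left.1 <| by
    simpa only [Matrix.norm_map_eq _ _ Complex.norm_conj] using hf.norm_left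

theorem Asymptotics.IsBigO.matrix_mul {α R S : Type*} [NormedRing R] [NormedRing S]
    [NormMulClass S] {l : Filter α} {f : α → Matrix m n R} {g : α → Matrix n p R} {u v : α → S}
    (hf : f =O[l] u) (hg : g =O[l] v) : (fun t => f t * g t) =O[l] fun t => u t * v t := by
  refine IsBigO.trans ?_ (hf.norm_left.mul hg.norm_left)
  refine IsBigO.of_bound (Fintype.card n) (Eventually.of_forall fun t => ?_)
  rw [Real.norm_of_nonneg (by positivity), ← mul_assoc]
  refine (Matrix.norm_le_iff (by positivity)).2 fun i j => ?_
  calc ‖(f t * g t) i j‖ ≤ ∑ k, ‖f t i k‖ * ‖g t k j‖ :=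
        (norm_sum_le _ _).trans (Finset.sum_le_sum fun k _ => norm_mul_le _ _)
    _ ≤ ∑ _k : n, ‖f t‖ * ‖g t‖ := Finset.sum_le_sum fun k _ =>
        mul_le_mul (norm_entry_le_entrywise_sup_norm _) (norm_entry_le_entrywise_sup_norm _)
          (norm_nonneg _) (norm_nonneg _)
    _ = Fintype.card n * ‖f t‖ * ‖g t‖ := by simp [mul_assoc]

end MatrixAsymptotics

section MatrixAnalytic

variable {N : Type*} [Fintype N]
variable {𝕜 G : Type*} [NontriviallyNormedField 𝕜] [NormedAddCommGroup G] [NormedSpace 𝕜 G]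

theorem AnalyticAt.matrix_mul {f g : G → Matrix N N 𝕜} {x : G} (hf : AnalyticAt 𝕜 f x)
    (hg : AnalyticAt 𝕜 g x) : AnalyticAt 𝕜 (fun y => f y * g y) x := by
  have entry : ∀ {h : G → Matrix N N 𝕜}, AnalyticAt 𝕜 h x → ∀ i j,
      AnalyticAt 𝕜 (fun y => h y i j) x :=
    fun hh i j => analyticAt_pi_iff.1 (analyticAt_pi_iff.1 hh i) j
  refine analyticAt_pi_iff.2 fun i => analyticAt_pi_iff.2 fun j => ?_
  simp only [Matrix.mul_apply]
  exact Finset.analyticAt_fun_sum _ fun k _ => (entry hf i k).mul (entry hg k j)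

theorem AnalyticAt.list_prod_ofFn [DecidableEq N] {s : ℕ} {F : Fin s → G → Matrix N N 𝕜}
    {x : G} (hF : ∀ j, AnalyticAt 𝕜 (F j) x) :
    AnalyticAt 𝕜 (fun y => (List.ofFn fun j => F j y).prod) x := by
  induction s with
  | zero => simpa using analyticAt_const
  | succ s ih =>
    simp only [List.ofFn_succ, List.prod_cons]
    exact (hF 0).matrix_mul (ih fun j => hF j.succ)

theorem AnalyticAt.matrix_map_conj {G : Type*} [NormedAddCommGroup G] [NormedSpace ℝ G]
    {f : G → Matrix N N ℂ} {x : G} (hf : AnalyticAt ℝ f x) :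
    AnalyticAt ℝ (fun y => (f y).map (starRingEnd ℂ)) x :=
  analyticAt_pi_iff.2 fun i => analyticAt_pi_iff.2 fun j =>
    Complex.conjCLE.toContinuousLinearMap.analyticAt _ |>.comp
      (analyticAt_pi_iff.1 (analyticAt_pi_iff.1 hf i) j)

end MatrixAnalytic

theorem Matrix.map_ofReal_map_re {m n : Type*} (M : Matrix m n ℂ) :
    (M.map Complex.re).map Complex.ofReal = (2 : ℂ)⁻¹ • (M + M.map (starRingEnd ℂ)) := by
  ext
  simp [Complex.re_eq_add_conj]
  ring

section SquareMatrix

variable {N : Type*} [Fintype N] [DecidableEq N]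

theorem Matrix.map_conj_exp (M : Matrix N N ℂ) :
    (exp M).map (starRingEnd ℂ) = exp (M.map (starRingEnd ℂ)) := by
  have h : ∀ M : Matrix N N ℂ, M.map (starRingEnd ℂ) = Mᴴᵀ := fun M => by
    ext; simp
  rw [h, h, ← Matrix.exp_conjTranspose, Matrix.exp_transpose]

theorem Matrix.map_conj_exp_of_map_conj_eq {M : Matrix N N ℂ}
    (hM : M.map (starRingEnd ℂ) = M) : (exp M).map (starRingEnd ℂ) = exp M := by
  rw [Matrix.map_conj_exp, hM]

theorem Matrix.exp_neg_mul_exp {R : Type*} [RCLike R] (M : Matrix N N R) :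
    exp (-M) * exp M = 1 := by
  rw [← Matrix.exp_add_of_commute _ _ (Commute.refl M).neg_left, neg_add_cancel, exp_zero]

/-- For `J = canonicalJ m` these are the symplectic matrices. -/
def formIsometries {R : Type*} [CommRing R] (J : Matrix N N R) : Submonoid (Matrix N N R) where
  carrier := {X | Xᵀ * J * X = J}
  mul_mem' {X Y} (hX : Xᵀ * J * X = J) (hY : Yᵀ * J * Y = J) :=
    calc (X * Y)ᵀ * J * (X * Y) = Yᵀ * (Xᵀ * J * X) * Y := by
          simp only [transpose_mul, Matrix.mul_assoc]
      _ = J := by rw [hX, hY]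
  one_mem' := by simp

theorem mem_formIsometries {R : Type*} [CommRing R] {J X : Matrix N N R} :
    X ∈ formIsometries J ↔ Xᵀ * J * X = J := Iff.rfl

theorem transpose_half_add_mul_mul_half_add_sub {K : Type*} [Field K] [CharZero K]
    {J X Y : Matrix N N K} (hX : X ∈ formIsometries J) (hY : Y ∈ formIsometries J) :
    ((2 : K)⁻¹ • (X + Y))ᵀ * J * ((2 : K)⁻¹ • (X + Y)) - J
      = -(4 : K)⁻¹ • ((X - Y)ᵀ * J * (X - Y)) := by
  rw [mem_formIsometries] at hX hY
  simp only [transpose_smul, transpose_add, transpose_sub, Matrix.smul_mul, Matrix.mul_smul,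
    Matrix.add_mul, Matrix.mul_add, Matrix.sub_mul, Matrix.mul_sub, hX, hY]
  module

theorem isBigO_add_of_add_mul_add_eq_one {𝕜 R : Type*} [NontriviallyNormedField 𝕜]
    [NormedRing R] {X Y E F : 𝕜 → Matrix N N R} {k : ℕ} (hk : 1 ≤ k)
    (hYX : ∀ t, Y t * X t = 1) (h : ∀ t, (Y t + F t) * (X t + E t) = 1)
    (hX : (fun t => X t - 1) =O[𝓝 0] (· ^ 1)) (hY : (fun t => Y t - 1) =O[𝓝 0] (· ^ 1))
    (hE : E =O[𝓝 0] (· ^ k)) (hF : F =O[𝓝 0] (· ^ k)) :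
    (fun t => E t + F t) =O[𝓝 0] (· ^ (k + 1)) := by
  have hsum : ∀ t, E t + F t = -((Y t - 1) * E t) - F t * (X t - 1) - F t * E t := fun t => by
    have h0 : Y t * E t + F t * X t + F t * E t = 0 := by
      have := h t
      rw [Matrix.add_mul, Matrix.mul_add, Matrix.mul_add, hYX, add_assoc, add_eq_left] at this
      rwa [add_assoc]
    calc E t + F t = E t + F t - (Y t * E t + F t * X t + F t * E t) := by rw [h0, sub_zero]
      _ = _ := by noncomm_ring
  simp only [hsum]
  have h1 : (fun t => (Y t - 1) * E t) =O[𝓝 0] (· ^ (k + 1)) :=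
    (hY.matrix_mul hE).congr_right fun t => by ring
  have h2 : (fun t => F t * (X t - 1)) =O[𝓝 0] (· ^ (k + 1)) :=
    (hF.matrix_mul hX).congr_right fun t => by ring
  have h3 : (fun t => F t * E t) =O[𝓝 0] (· ^ (k + 1)) :=
    ((hF.matrix_mul hE).congr_right fun t => (pow_add t k k).symm).trans
      (isBigO_pow_pow_of_le (by omega : k + 1 ≤ k + k))
  exact (h1.neg_left.sub h2).sub h3

theorem isBigO_sub_map_conj_of_map_conj_neg_mul_eq_one {P X : ℝ → Matrix N N ℂ} {k : ℕ}
    (hk : Odd k) (hP : AnalyticAt ℝ P 0) (hPinv : ∀ t, (P (-t)).map (starRingEnd ℂ) * P t = 1)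
    (hX0 : X 0 = 1) (hXreal : ∀ t, (X t).map (starRingEnd ℂ) = X t)
    (hXinv : ∀ t, X (-t) * X t = 1) (hPX : (fun t => P t - X t) =O[𝓝 0] (· ^ k)) :
    (fun t => P t - (P t).map (starRingEnd ℂ)) =O[𝓝 0] (· ^ (k + 1)) := by
  have conj_sub : ∀ M M' : Matrix N N ℂ, (M - M').map (starRingEnd ℂ)
      = M.map (starRingEnd ℂ) - M'.map (starRingEnd ℂ) :=
    fun M M' => Matrix.map_sub _ (map_sub _) M M'
  have hP0 : P 0 = 1 := by
    have := hPX.eq_zero_imp.self_of_nhds (zero_pow hk.pos.ne')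
    rwa [sub_eq_zero, hX0] at this
  have hX : (fun t => X t - 1) =O[𝓝 0] (· ^ 1) := by
    have hP1 : (fun t => P t - 1) =O[𝓝 0] (· ^ 1) := by
      simpa [hP0] using hP.differentiableAt.isBigO_sub
    exact (hP1.sub (hPX.trans (isBigO_pow_pow_of_le hk.pos))).congr_left fun t => by abel
  have hF : (fun t => (P (-t)).map (starRingEnd ℂ) - X (-t)) =O[𝓝 0] (· ^ k) :=
    hPX.comp_neg_pow.matrix_map_conj.congr_left fun t => by rw [conj_sub, hXreal]
  have hW := isBigO_add_of_add_mul_add_eq_one (Y := fun t => X (-t)) hk.pos hXinv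
    (fun t => by simpa using hPinv t) hX hX.comp_neg_pow hPX hF
  have hQ : (fun t => P t - (P t).map (starRingEnd ℂ)) =O[𝓝 0] (· ^ k) :=
    (hPX.sub hPX.matrix_map_conj).congr_left fun t => by rw [conj_sub, hXreal]; abel
  refine (hP.sub hP.matrix_map_conj).isBigO_pow_succ_of_odd hk hQ ?_
  exact (hW.sub hW.comp_neg_pow).congr_left fun t => by simp only [neg_neg, Pi.sub_apply]; abel

theorem isBigO_map_re_transpose_mul_mul_sub {α : Type*} {l : Filter α} {P : α → Matrix N N ℂ}
    {J : Matrix N N ℝ} {u : α → ℝ} (hP : ∀ t, P t ∈ formIsometries (J.map Complex.ofReal))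
    (hPc : ∀ t, (P t).map (starRingEnd ℂ) ∈ formIsometries (J.map Complex.ofReal))
    (hQ : (fun t => P t - (P t).map (starRingEnd ℂ)) =O[l] u) :
    (fun t => ((P t).map Complex.re)ᵀ * J * (P t).map Complex.re - J) =O[l]
      fun t => u t * u t := by
  have key : ∀ t, (((P t).map Complex.re)ᵀ * J * (P t).map Complex.re - J).map Complex.ofReal
      = -(4 : ℂ)⁻¹ • ((P t - (P t).map (starRingEnd ℂ))ᵀ * J.map Complex.ofReal
          * (P t - (P t).map (starRingEnd ℂ))) := fun t => by
    rw [← transpose_half_add_mul_mul_half_add_sub (hP t) (hPc t), ← Matrix.map_ofReal_map_re]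
    have hmap : ∀ M : Matrix N N ℝ, M.map Complex.ofReal = Complex.ofRealHom.mapMatrix M :=
      fun _ => rfl
    simp only [hmap, map_sub, map_mul]
    simp only [RingHom.mapMatrix_apply, Matrix.transpose_map]
  have hJ : (fun _ : α => J.map Complex.ofReal) =O[l] fun _ => (1 : ℝ) :=
    isBigO_const_const _ one_ne_zero _
  have h := ((hQ.matrix_transpose.matrix_mul hJ).matrix_mul hQ).const_smul_left (-(4 : ℂ)⁻¹)
  refine isBigO_norm_left.1 <| ((h.congr_left fun t => (key t).symm).norm_left).congr
    (fun t => Matrix.norm_map_eq _ _ Complex.norm_real) fun t => by ring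

end SquareMatrix

section Composition

variable {M : Type*} [Monoid M] {s : ℕ}

def compositionMethod (S : ℂ → M) (α : Fin s → ℂ) (z : ℂ) : M :=
  (List.ofFn fun j => S (α j * z)).reverse.prod

theorem compositionMethod_eq_prod_ofFn_rev (S : ℂ → M) (α : Fin s → ℂ) (z : ℂ) :
    compositionMethod S α z = (List.ofFn fun j => S (α j.rev * z)).prod := by
  rw [compositionMethod, ← List.ofFn_comp_rev]

theorem compositionMethod_mem {S : ℂ → M} {K : Submonoid M} (hS : ∀ z, S z ∈ K)
    (α : Fin s → ℂ) (z : ℂ) : compositionMethod S α z ∈ K :=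
  K.list_prod_mem fun x hx => by
    obtain ⟨j, rfl⟩ := List.mem_ofFn.1 (List.mem_reverse.1 hx)
    exact hS _

theorem compositionMethod_rev_neg_mul_compositionMethod {S : ℂ → M}
    (hTS : ∀ z, S z * S (-z) = 1) (α : Fin s → ℂ) (z : ℂ) :
    compositionMethod S (fun j => α j.rev) (-z) * compositionMethod S α z = 1 := by
  rw [compositionMethod_eq_prod_ofFn_rev, compositionMethod, List.ofFn_eq_map, List.ofFn_eq_map]
  simp only [Fin.rev_rev]
  exact List.prod_map_mul_prod_reverse_map (fun j => by simpa using hTS (-(α j * z))) _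

variable {N : Type*} [Fintype N] [DecidableEq N]

theorem map_conj_compositionMethod {S : ℂ → Matrix N N ℂ}
    (hReal : ∀ z, (S z).map (starRingEnd ℂ) = S (starRingEnd ℂ z)) (α : Fin s → ℂ) (z : ℂ) :
    (compositionMethod S α z).map (starRingEnd ℂ)
      = compositionMethod S (fun j => starRingEnd ℂ (α j)) (starRingEnd ℂ z) := by
  rw [compositionMethod, ← RingHom.mapMatrix_apply, map_list_prod, List.map_reverse,
    List.map_ofFn]
  simp [Function.comp_def, hReal, compositionMethod]

theorem analyticAt_compositionMethod {S : ℂ → Matrix N N ℂ} (hS : ∀ z, AnalyticAt ℂ S z)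
    (α : Fin s → ℂ) (z : ℂ) : AnalyticAt ℂ (compositionMethod S α) z := by
  rw [funext (compositionMethod_eq_prod_ofFn_rev S α)]
  exact AnalyticAt.list_prod_ofFn fun j => (hS _).comp (analyticAt_const.mul analyticAt_id)

end Composition

theorem symmetric_conjugate_even_order_pseudo_symplectic_general
    (m s n : ℕ)
    (A : Matrix (Fin (m + m)) (Fin (m + m)) ℝ)
    (S : ℂ → Matrix (Fin (m + m)) (Fin (m + m)) ℂ)
    -- `S` is analytic
    (hAnal : ∀ z : ℂ, AnalyticAt ℂ S z)
    -- `S` is time-symmetric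
    (hTS : ∀ z : ℂ, S z * S (-z) = 1)
    -- `S` is real
    (hReal : ∀ z : ℂ, (S z).map (starRingEnd ℂ) = S (starRingEnd ℂ z))
    -- `S` is symplectic
    (hSymp : ∀ z : ℂ, (S z)ᵀ * (canonicalJ m).map Complex.ofReal * S z
      = (canonicalJ m).map Complex.ofReal)
    -- symmetric-conjugate coefficients
    (α : Fin s → ℂ)
    (hSC : ∀ j : Fin s, α (Fin.rev j) = starRingEnd ℂ (α j))
    -- the composition `P h = S (α_s h) ⋯ S (α_1 h)`
    (P : ℝ → Matrix (Fin (m + m)) (Fin (m + m)) ℂ)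
    (hP : ∀ h : ℝ, P h = ((List.ofFn fun j : Fin s => S (α j * (h : ℂ))).reverse).prod)
    -- ... is of even order `2n`
    (hPord : (fun h : ℝ => P h - NormedSpace.exp ((h : ℂ) • A.map Complex.ofReal))
      =O[nhds 0] fun h : ℝ => h ^ (2 * n + 1))
    -- `R h` is the entrywise real part of `P h`
    (R : ℝ → Matrix (Fin (m + m)) (Fin (m + m)) ℝ)
    (hR : ∀ h : ℝ, R h = (P h).map Complex.re) :
    (fun h : ℝ => (R h)ᵀ * canonicalJ m * R h - canonicalJ m)
      =O[nhds 0] fun h : ℝ => h ^ (4 * n + 4) := by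
  obtain rfl : P = fun t : ℝ => compositionMethod S α t := funext hP
  obtain rfl : R = _ := funext hR
  have hconj : ∀ t : ℝ, (compositionMethod S α t).map (starRingEnd ℂ)
      = compositionMethod S (fun j => α j.rev) t := fun t => by
    rw [map_conj_compositionMethod hReal, Complex.conj_ofReal]
    simp only [hSC]
  have hPinv : ∀ t : ℝ, (compositionMethod S α ↑(-t)).map (starRingEnd ℂ)
      * compositionMethod S α t = 1 := fun t => by
    rw [hconj, Complex.ofReal_neg]
    exact compositionMethod_rev_neg_mul_compositionMethod hTS α t
  have hXreal : ∀ t : ℝ, (exp ((t : ℂ) • A.map Complex.ofReal)).map (starRingEnd ℂ)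
      = exp ((t : ℂ) • A.map Complex.ofReal) := fun t =>
    Matrix.map_conj_exp_of_map_conj_eq (by ext; simp)
  have hXinv : ∀ t : ℝ, exp (((-t : ℝ) : ℂ) • A.map Complex.ofReal)
      * exp ((t : ℂ) • A.map Complex.ofReal) = 1 := fun t => by
    rw [Complex.ofReal_neg, neg_smul]
    exact Matrix.exp_neg_mul_exp _
  have hPan : AnalyticAt ℝ (fun t : ℝ => compositionMethod S α t) 0 :=
    (analyticAt_compositionMethod hAnal α _).restrictScalars.comp (Complex.ofRealCLM.analyticAt 0)
  have hQ := isBigO_sub_map_conj_of_map_conj_neg_mul_eq_one (odd_two_mul_add_one n) hPan hPinv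
    (by simp) hXreal hXinv hPord
  have hsymp : ∀ z, S z ∈ formIsometries ((canonicalJ m).map Complex.ofReal) := hSymp
  exact (isBigO_map_re_transpose_mul_mul_sub (fun t : ℝ => compositionMethod_mem hsymp α t)
    (fun t : ℝ => hconj t ▸ compositionMethod_mem hsymp _ t) hQ).congr_right
    fun t : ℝ => by ring

/-- Proposition 2(b) of the paper, linear/matrix form, symplecticity part:
the real part of a symmetric-conjugate composition of even order `2n` of a
time-symmetric second-order real symplectic basic method is pseudo-symplectic
of order `4n+3`. -/
theorem symmetric_conjugate_even_order_pseudo_symplectic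
    (m s n : ℕ) (hn : 2 ≤ n)
    (A : Matrix (Fin (m + m)) (Fin (m + m)) ℝ)
    (S : ℂ → Matrix (Fin (m + m)) (Fin (m + m)) ℂ)
    -- `S` is analytic
    (hAnal : ∀ z : ℂ, AnalyticAt ℂ S z)
    -- `S` is time-symmetric
    (hTS : ∀ z : ℂ, S z * S (-z) = 1)
    -- `S` is real
    (hReal : ∀ z : ℂ, (S z).map (starRingEnd ℂ) = S (starRingEnd ℂ z))
    -- `S` is a second-order approximation of `exp (h A)`
    (hOrd2 : (fun h : ℝ => S (h : ℂ) - NormedSpace.exp ((h : ℂ) • A.map Complex.ofReal))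
      =O[nhds 0] fun h : ℝ => h ^ 3)
    -- `S` is symplectic
    (hSymp : ∀ z : ℂ, (S z)ᵀ * (canonicalJ m).map Complex.ofReal * S z
      = (canonicalJ m).map Complex.ofReal)
    -- symmetric-conjugate coefficients
    (α : Fin s → ℂ)
    (hSC : ∀ j : Fin s, α (Fin.rev j) = starRingEnd ℂ (α j))
    -- the composition `P h = S (α_s h) ⋯ S (α_1 h)`
    (P : ℝ → Matrix (Fin (m + m)) (Fin (m + m)) ℂ)
    (hP : ∀ h : ℝ, P h = ((List.ofFn fun j : Fin s => S (α j * (h : ℂ))).reverse).prod)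
    -- ... is of even order `2n`
    (hPord : (fun h : ℝ => P h - NormedSpace.exp ((h : ℂ) • A.map Complex.ofReal))
      =O[nhds 0] fun h : ℝ => h ^ (2 * n + 1))
    -- `R h` is the entrywise real part of `P h`
    (R : ℝ → Matrix (Fin (m + m)) (Fin (m + m)) ℝ)
    (hR : ∀ h : ℝ, R h = (P h).map Complex.re) :
    (fun h : ℝ => (R h)ᵀ * canonicalJ m * R h - canonicalJ m)
      =O[nhds 0] fun h : ℝ => h ^ (4 * n + 4) :=
  symmetric_conjugate_even_order_pseudo_symplectic_general m s n A S hAnal hTS hReal hSymp α hSC P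
    hP hPord R hR
end

section
/- Let L(z) = M_T(z/2)·M_V(z)·M_T(z/2) be the leapfrog matrix for the harmonic oscillator, let α = 1/2 + (√3/6)·i, and let R(h) be the entrywise real part of L(α h)·L(conj(α) h). Then (fun h : ℝ => R(−h)·R(h) − 1) is O(h⁸) as h → 0; that is, the projected fourth-order method R̂⁴ is pseudo-symmetric of order 7 for the harmonic oscillator. -/
open Matrix Asymptotics Filter

attribute [local instance] Matrix.normedAddCommGroup Matrix.normedSpace

/-- Exact evolution matrix of the harmonic oscillator `q' = p`, `p' = -q`. -/
noncomputable def MH (z : ℂ) : Matrix (Fin 2) (Fin 2) ℂ :=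
  !![Complex.cos z, Complex.sin z; -Complex.sin z, Complex.cos z]

/-- Exact evolution matrix of the kinetic part. -/
def MT (z : ℂ) : Matrix (Fin 2) (Fin 2) ℂ := !![1, z; 0, 1]

/-- Exact evolution matrix of the potential part. -/
def MV (z : ℂ) : Matrix (Fin 2) (Fin 2) ℂ := !![1, 0; -z, 1]

/-- The leapfrog/Strang splitting matrix. -/
noncomputable def L (z : ℂ) : Matrix (Fin 2) (Fin 2) ℂ := MT (z / 2) * MV z * MT (z / 2)

/-- The coefficient `α = 1/2 + (√3/6) i`. -/
noncomputable def αc : ℂ := 1 / 2 + (Real.sqrt 3 / 6 : ℝ) * Complex.I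

/-- The real projection of the composition `S_{αh} ∘ S_{ᾱh}`. -/
noncomputable def Rproj (h : ℝ) : Matrix (Fin 2) (Fin 2) ℝ :=
  (L (αc * (h : ℂ)) * L (starRingEnd ℂ αc * (h : ℂ))).map Complex.re

/-!
Since `L z = !![1 - z²/2, z - z³/4; -z, 1 - z²/2]` and `α + ᾱ = 1`, `αᾱ = 1/3`, the projected
composition is the polynomial matrix `Rproj h = !![c h, b h; -a h, c h]` with `c` even and `a`, `b`
odd. Hence `Rproj (-h)` is the adjugate of `Rproj h`, so `Rproj (-h) * Rproj h = det (Rproj h) • 1`,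
and the projection spoils the unit determinant only at order eight: `det (Rproj h) = 1 - h⁸/1728`.
-/

lemma L_eq (z : ℂ) : L z = !![1 - z ^ 2 / 2, z - z ^ 3 / 4; -z, 1 - z ^ 2 / 2] := by
  simp only [L, MT, MV, mul_fin_two]
  congr 1; ring_nf

lemma αc_re : αc.re = 1 / 2 := by simp [αc]

lemma αc_im_sq : αc.im ^ 2 = 1 / 12 := by
  simp [αc, div_pow]; norm_num

lemma Rproj_eq (h : ℝ) :
    Rproj h = !![1 - h ^ 2 / 2 + h ^ 4 / 24, h - h ^ 3 / 6 + h ^ 5 / 72;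
      -h + h ^ 3 / 6, 1 - h ^ 2 / 2 + h ^ 4 / 24] := by
  have hα := αc_im_sq
  rw [Rproj, L_eq, L_eq, mul_fin_two]
  ext i j
  fin_cases i <;> fin_cases j <;>
    simp only [Fin.zero_eta, Fin.mk_one, Fin.isValue, map_apply, of_apply, cons_val', cons_val_zero,
      cons_val_one, cons_val_fin_one, pow_succ, pow_zero, one_mul, Complex.add_re, Complex.sub_re,
      Complex.sub_im, Complex.mul_re, Complex.mul_im, Complex.neg_re, Complex.neg_im, Complex.one_re,
      Complex.one_im, Complex.div_ofNat_re, Complex.div_ofNat_im, Complex.ofReal_re, Complex.ofReal_im,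
      Complex.conj_re, Complex.conj_im, αc_re] <;>
    grind

lemma Rproj_neg_eq_adjugate (h : ℝ) : Rproj (-h) = adjugate (Rproj h) := by
  rw [Rproj_eq, Rproj_eq, adjugate_fin_two_of]
  ext i j
  fin_cases i <;> fin_cases j <;>
    simp only [Fin.zero_eta, Fin.mk_one, Fin.isValue, of_apply, cons_val', cons_val_zero, cons_val_one,
      cons_val_fin_one] <;>
    ring

lemma det_Rproj (h : ℝ) : det (Rproj h) = 1 - h ^ 8 / 1728 := by
  rw [Rproj_eq, det_fin_two_of]; ring

/-- the projected fourth-order method `R̂⁴` is pseudo-symmetric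
of order 7 for the harmonic oscillator. -/
theorem projected_two_stage_composition_pseudo_symmetric_order_seven :
    (fun h : ℝ => Rproj (-h) * Rproj h - 1) =O[nhds 0] fun h : ℝ => h ^ 8 := by
  have key (h : ℝ) :
      Rproj (-h) * Rproj h - 1 = h ^ 8 • (-1 / 1728 : ℝ) • (1 : Matrix (Fin 2) (Fin 2) ℝ) := by
    rw [Rproj_neg_eq_adjugate, adjugate_mul, det_Rproj]
    module
  simp_rw [key]
  simpa using (isBigO_refl (fun h : ℝ => h ^ 8) _).smul
    (isBigO_const_const ((-1 / 1728 : ℝ) • (1 : Matrix (Fin 2) (Fin 2) ℝ)) (c' := (1 : ℝ))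
      one_ne_zero (nhds 0))
end
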